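/- Let (G, B) be a metric n-Lie algebra possessing simple ideals. Then G has a unique maximal strong semisimple ideal S(G), equal to the (direct) sum of all simple ideals of G, and G = S(G) ⊕ S(G)^⊥. -/

import Mathlib

open scoped BigOperators

section NLiePreamble

variable {n : ℕ} {G : Type*} [AddCommGroup G] [Module ℂ G]

/-- The inner derivation `ad_y z = [y₁, …, y_{n+1}, z]` determined by an
`(n+2)`-ary alternating bracket. -/
def nAd (br : AlternatingMap ℂ G G (Fin (n + 2))) (y : Fin (n + 1) → G) (z : G) : G :=
  br (Fin.snoc y z)

/-- The generalized Jacobi identity: the bracket makes `G` an `(n+2)`-Lie algebra. -/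
def IsNLie (br : AlternatingMap ℂ G G (Fin (n + 2))) : Prop :=
  ∀ (x : Fin (n + 2) → G) (y : Fin (n + 1) → G),
    nAd br y (br x) = ∑ i, br (Function.update x i (nAd br y (x i)))

/-- A submodule `I` is an ideal: `[I, G, …, G] ⊆ I`. -/
def IsIdeal (br : AlternatingMap ℂ G G (Fin (n + 2))) (I : Submodule ℂ G) : Prop :=
  ∀ (y : Fin (n + 1) → G), ∀ x ∈ I, br (Fin.snoc y x) ∈ I

/-- Invariance of a bilinear form under the bracket. -/
def IsInvariantForm (br : AlternatingMap ℂ G G (Fin (n + 2)))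
    (K : LinearMap.BilinForm ℂ G) : Prop :=
  ∀ (x : Fin (n + 1) → G) (y₁ y₂ : G),
    K (br (Fin.snoc x y₁)) y₂ = - K (br (Fin.snoc x y₂)) y₁

/-- A metric on an `n`-Lie algebra: a nondegenerate invariant symmetric bilinear form. -/
def IsMetric (br : AlternatingMap ℂ G G (Fin (n + 2)))
    (B : LinearMap.BilinForm ℂ G) : Prop :=
  B.Nondegenerate ∧ (∀ x y : G, B x y = B y x) ∧ IsInvariantForm br B

/-- The span `[W₁, …, W_{n+2}]` of all brackets with entries in the given subspaces. -/
def bracketSpan (br : AlternatingMap ℂ G G (Fin (n + 2)))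
    (W : Fin (n + 2) → Submodule ℂ G) : Submodule ℂ G :=
  Submodule.span ℂ {z | ∃ w : Fin (n + 2) → G, (∀ i, w i ∈ W i) ∧ z = br w}

/-- The derived algebra `[G, …, G]`. -/
def derivedAlg (br : AlternatingMap ℂ G G (Fin (n + 2))) : Submodule ℂ G :=
  bracketSpan br fun _ => ⊤

/-- `[I, …, I]` for a subspace `I`. -/
def derivedStep (br : AlternatingMap ℂ G G (Fin (n + 2))) (I : Submodule ℂ G) :
    Submodule ℂ G :=
  bracketSpan br fun _ => I

/-- `[J, H, G, …, G]` for subspaces `J, H`. -/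
def pairBracket (br : AlternatingMap ℂ G G (Fin (n + 2))) (J H : Submodule ℂ G) :
    Submodule ℂ G :=
  bracketSpan br (Fin.cons J (Fin.cons H fun _ => (⊤ : Submodule ℂ G)))

/-- `[I, G, …, G]` for a subspace `I`. -/
def idealBracket (br : AlternatingMap ℂ G G (Fin (n + 2))) (I : Submodule ℂ G) :
    Submodule ℂ G :=
  bracketSpan br (Fin.cons I fun _ => (⊤ : Submodule ℂ G))

/-- The centralizer `C_G(I) = {x : [x, I, G, …, G] = 0}` of a subspace `I`. -/
def centralizer (br : AlternatingMap ℂ G G (Fin (n + 2))) (I : Submodule ℂ G) :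
    Submodule ℂ G where
  carrier := {x | ∀ v ∈ I, ∀ y : Fin n → G, br (Fin.cons x (Fin.cons v y)) = 0}
  add_mem' := by
    intro a b ha hb v hv y
    have := br.toMultilinearMap.cons_add (Fin.cons v y) a b
    simp only [AlternatingMap.coe_multilinearMap] at this
    rw [this, ha v hv y, hb v hv y, add_zero]
  zero_mem' := by
    intro v hv y
    have := br.toMultilinearMap.cons_smul (Fin.cons v y) (0 : ℂ) 0
    simpa using (br.toMultilinearMap.map_coord_zero (m := Fin.cons 0 (Fin.cons v y)) 0 rfl)
  smul_mem' := by
    intro c a ha v hv y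
    have := br.toMultilinearMap.cons_smul (Fin.cons v y) c a
    simp only [AlternatingMap.coe_multilinearMap] at this
    rw [this, ha v hv y, smul_zero]

/-- The center `C(G)`. -/
def center (br : AlternatingMap ℂ G G (Fin (n + 2))) : Submodule ℂ G :=
  centralizer br ⊤

/-- Nondegeneracy of `B` restricted to a subspace `W`. -/
def NondegOn (B : LinearMap.BilinForm ℂ G) (W : Submodule ℂ G) : Prop :=
  ∀ x ∈ W, (∀ y ∈ W, B x y = 0) → x = 0

/-- `(G, B)` is `B`-irreducible: no nontrivial nondegenerate ideals. -/
def BIrreducible (br : AlternatingMap ℂ G G (Fin (n + 2)))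
    (B : LinearMap.BilinForm ℂ G) : Prop :=
  ∀ I : Submodule ℂ G, IsIdeal br I → NondegOn B I → I = ⊥ ∨ I = ⊤

/-- `W` is a subalgebra. -/
def IsSubalgebra (br : AlternatingMap ℂ G G (Fin (n + 2))) (W : Submodule ℂ G) : Prop :=
  ∀ x : Fin (n + 2) → G, (∀ i, x i ∈ W) → br x ∈ W

/-- `I` is an ideal of the subalgebra `W`. -/
def IsIdealOf (br : AlternatingMap ℂ G G (Fin (n + 2))) (W I : Submodule ℂ G) : Prop :=
  I ≤ W ∧ ∀ (y : Fin (n + 1) → G), (∀ i, y i ∈ W) → ∀ x ∈ I, br (Fin.snoc y x) ∈ I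

/-- The subalgebra `W` is a simple `n`-Lie algebra. -/
def IsSimpleAlg (br : AlternatingMap ℂ G G (Fin (n + 2))) (W : Submodule ℂ G) : Prop :=
  derivedStep br W ≠ ⊥ ∧ ∀ I : Submodule ℂ G, IsIdealOf br W I → I = ⊥ ∨ I = W

/-- The subalgebra `W` is strong semisimple: a direct sum of simple ideals. -/
def IsStrongSemisimple (br : AlternatingMap ℂ G G (Fin (n + 2)))
    (W : Submodule ℂ G) : Prop :=
  ∃ (m : ℕ) (S : Fin m → Submodule ℂ G),
    (∀ i, IsIdealOf br W (S i) ∧ IsSimpleAlg br (S i)) ∧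
    iSupIndep S ∧ (⨆ i, S i) = W

/-- `I` is solvable (via the derived series). -/
def NLieSolvable (br : AlternatingMap ℂ G G (Fin (n + 2))) (I : Submodule ℂ G) : Prop :=
  ∃ k : ℕ, (derivedStep br)^[k] I = ⊥

/-- `R` is the radical: the maximal solvable ideal. -/
def NLieRadical (br : AlternatingMap ℂ G G (Fin (n + 2))) (R : Submodule ℂ G) : Prop :=
  IsIdeal br R ∧ NLieSolvable br R ∧
    ∀ I : Submodule ℂ G, IsIdeal br I → NLieSolvable br I → I ≤ R

/-- A Levi decomposition `G = S ⊕ R`. -/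
def IsLeviDecomp (br : AlternatingMap ℂ G G (Fin (n + 2)))
    (S R : Submodule ℂ G) : Prop :=
  NLieRadical br R ∧ IsSubalgebra br S ∧ IsStrongSemisimple br S ∧ IsCompl S R

/-- A minimal ideal of `G`. -/
def IsMinimalIdeal (br : AlternatingMap ℂ G G (Fin (n + 2))) (J : Submodule ℂ G) : Prop :=
  IsIdeal br J ∧ J ≠ ⊥ ∧
    ∀ I : Submodule ℂ G, IsIdeal br I → I ≤ J → I = ⊥ ∨ I = J

/-- The socle: the sum of all minimal ideals. -/
def socle (br : AlternatingMap ℂ G G (Fin (n + 2))) : Submodule ℂ G :=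
  sSup {J | IsMinimalIdeal br J}

/-- `H` is an `S`-submodule: `[S, …, S, H] ⊆ H`. -/
def IsSModule (br : AlternatingMap ℂ G G (Fin (n + 2))) (S H : Submodule ℂ G) : Prop :=
  ∀ (y : Fin (n + 1) → G), (∀ i, y i ∈ S) → ∀ x ∈ H, br (Fin.snoc y x) ∈ H

/-- `H` is an irreducible `S`-submodule. -/
def IsIrreducibleSModule (br : AlternatingMap ℂ G G (Fin (n + 2)))
    (S H : Submodule ℂ G) : Prop :=
  IsSModule br S H ∧ H ≠ ⊥ ∧
    ∀ K : Submodule ℂ G, K ≤ H → IsSModule br S K → K = ⊥ ∨ K = H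

/-- The space of invariant symmetric bilinear forms on `G`. -/
def invSymForms (br : AlternatingMap ℂ G G (Fin (n + 2))) :
    Submodule ℂ (LinearMap.BilinForm ℂ G) where
  carrier := {K | (∀ x y : G, K x y = K y x) ∧ IsInvariantForm br K}
  add_mem' := by
    rintro K L ⟨hK1, hK2⟩ ⟨hL1, hL2⟩
    refine ⟨fun x y => by simp [hK1 x y, hL1 x y], fun x y₁ y₂ => ?_⟩
    simp only [LinearMap.add_apply]
    rw [hK2 x y₁ y₂, hL2 x y₁ y₂]; ring
  zero_mem' := ⟨fun x y => by simp, fun x y₁ y₂ => by simp⟩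
  smul_mem' := by
    rintro c K ⟨hK1, hK2⟩
    refine ⟨fun x y => by simp [hK1 x y], fun x y₁ y₂ => ?_⟩
    simp only [LinearMap.smul_apply, smul_eq_mul]
    rw [hK2 x y₁ y₂]; ring

/-- The span of all nondegenerate invariant symmetric bilinear forms (the metric space `B(G)`). -/
def metricSpan (br : AlternatingMap ℂ G G (Fin (n + 2))) :
    Submodule ℂ (LinearMap.BilinForm ℂ G) :=
  Submodule.span ℂ {K : LinearMap.BilinForm ℂ G | IsMetric br K}

/-- `Γ_B(G)`: `B`-self-adjoint elements of the centroid. -/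
def centroidB (br : AlternatingMap ℂ G G (Fin (n + 2)))
    (B : LinearMap.BilinForm ℂ G) : Submodule ℂ (G →ₗ[ℂ] G) where
  carrier := {φ | (∀ (x : Fin (n + 1) → G) (z : G),
      φ (br (Fin.snoc x z)) = br (Fin.snoc x (φ z))) ∧
    ∀ x y : G, B (φ x) y = B x (φ y)}
  add_mem' := by
    rintro φ ψ ⟨hφ1, hφ2⟩ ⟨hψ1, hψ2⟩
    constructor
    · intro x z
      have hadd := br.toMultilinearMap.snoc_add x (φ z) (ψ z)
      simp only [AlternatingMap.coe_multilinearMap] at hadd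
      simp [hφ1 x z, hψ1 x z, hadd]
    · intro x y; simp [hφ2 x y, hψ2 x y]
  zero_mem' := by
    constructor
    · intro x z
      have h0 := br.toMultilinearMap.map_coord_zero (m := Fin.snoc x (0 : G)) (Fin.last _)
        (by simp)
      simp only [AlternatingMap.coe_multilinearMap] at h0
      simp [h0]
    · intro x y; simp
  smul_mem' := by
    rintro c φ ⟨hφ1, hφ2⟩
    constructor
    · intro x z
      have hs := br.toMultilinearMap.snoc_smul x c (φ z)
      simp only [AlternatingMap.coe_multilinearMap] at hs
      simp [hφ1 x z, hs]
    · intro x y; simp [hφ2 x y]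

end NLiePreamble

/-!
Simple ideals are perfect and pairwise meet in `0`, so distinct ones centralize each other, while
by the Jacobi identity a simple ideal meets its own centralizer in `0`; since `G` is
finite-dimensional the sum `S` of all simple ideals is a finite one, and this makes it direct.
A simple ideal `J` of a strong semisimple ideal `I` is perfect, so the Jacobi identity gives
`[G, …, G, J] = [G, …, G, [J, …, J]] ⊆ [J, …, J, I] ⊆ J`: `J` is an ideal of `G`, whence
maximality. Finally `S ∩ S^⊥` is an ideal containing no simple ideal `J` (a perfect ideal with
`B(J, J) = 0` has `B(J, G) = B(J, [J, …, J, G]) = 0` by invariance), so it meets every simple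
ideal in `0`, centralizes all of them and therefore vanishes, by the modular law.
-/

theorem Finset.disjoint_sup_inf_of_le_of_ne {α ι : Type*} [Lattice α] [BoundedOrder α]
    [IsModularLattice α] [DecidableEq ι] {a c : ι → α} (s : Finset ι)
    (hac : ∀ i ∈ s, Disjoint (a i) (c i)) (hca : ∀ i ∈ s, ∀ j ∈ s, i ≠ j → a j ≤ c i) :
    Disjoint (s.sup a) (s.inf c) := by
  induction s using Finset.induction_on with
  | empty => simp
  | insert i s hi ih =>
    have hsub {j} (hj : j ∈ s) : j ∈ insert i s := Finset.mem_insert_of_mem hj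
    have hsup : s.sup a ≤ c i := Finset.sup_le fun j hj =>
      hca i (s.mem_insert_self i) j (hsub hj) (ne_of_mem_of_not_mem hj hi).symm
    have hrest : Disjoint (s.sup a) (s.inf c) :=
      ih (fun j hj => hac j (hsub hj)) fun j hj k hk => hca j (hsub hj) k (hsub hk)
    rw [Finset.sup_insert, Finset.inf_insert, sup_comm, disjoint_iff_inf_le]
    calc (s.sup a ⊔ a i) ⊓ (c i ⊓ s.inf c)
        = ((s.sup a ⊔ a i) ⊓ c i) ⊓ s.inf c := (inf_assoc _ _ _).symm
      _ = (s.sup a ⊔ a i ⊓ c i) ⊓ s.inf c := by rw [sup_inf_assoc_of_le _ hsup]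
      _ = s.sup a ⊓ s.inf c := by rw [(hac i (s.mem_insert_self i)).eq_bot, sup_bot_eq]
      _ ≤ ⊥ := hrest.le_bot

section NLieIdeals

variable {n : ℕ} {G : Type*} [AddCommGroup G] [Module ℂ G]
variable (br : AlternatingMap ℂ G G (Fin (n + 2)))

def nAdLinearMap (y : Fin (n + 1) → G) : G →ₗ[ℂ] G where
  toFun := nAd br y
  map_add' := br.toMultilinearMap.snoc_add y
  map_smul' := br.toMultilinearMap.snoc_smul y

theorem isIdeal_iff_le_comap {I : Submodule ℂ G} :
    IsIdeal br I ↔ ∀ y, I ≤ I.comap (nAdLinearMap br y) :=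
  Iff.rfl

theorem bracketSpan_le_iff {W : Fin (n + 2) → Submodule ℂ G} {N : Submodule ℂ G} :
    bracketSpan br W ≤ N ↔ ∀ w : Fin (n + 2) → G, (∀ i, w i ∈ W i) → br w ∈ N := by
  rw [bracketSpan, Submodule.span_le]
  refine ⟨fun h w hw => h ⟨w, hw, rfl⟩, ?_⟩
  rintro h _ ⟨w, hw, rfl⟩
  exact h w hw

variable {br}

theorem IsIdealOf.apply_mem {W I : Submodule ℂ G} (hI : IsIdealOf br W I)
    {w : Fin (n + 2) → G} (hw : ∀ i, w i ∈ W) {j : Fin (n + 2)} (hj : w j ∈ I) : br w ∈ I := by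
  rcases eq_or_ne j (Fin.last (n + 1)) with rfl | hne
  · simpa using hI.2 (Fin.init w) (fun i => hw _) _ hj
  · have h := hI.2 (Fin.init (w ∘ Equiv.swap j (Fin.last (n + 1)))) (fun i => hw _)
      ((w ∘ Equiv.swap j (Fin.last (n + 1))) (Fin.last (n + 1)))
      (by simpa [Equiv.swap_apply_right] using hj)
    rwa [Fin.snoc_init_self, br.map_swap w hne, neg_mem_iff] at h

theorem IsIdeal.isIdealOf {W I : Submodule ℂ G} (hI : IsIdeal br I) (hle : I ≤ W) :
    IsIdealOf br W I :=
  ⟨hle, fun y _ x hx => hI y x hx⟩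

theorem IsIdeal.apply_mem {I : Submodule ℂ G} (hI : IsIdeal br I)
    {w : Fin (n + 2) → G} {j : Fin (n + 2)} (hj : w j ∈ I) : br w ∈ I :=
  (hI.isIdealOf le_top).apply_mem (fun _ => Submodule.mem_top) hj

theorem IsIdeal.inf {I J : Submodule ℂ G} (hI : IsIdeal br I) (hJ : IsIdeal br J) :
    IsIdeal br (I ⊓ J) :=
  fun y x hx => ⟨hI y x hx.1, hJ y x hx.2⟩

theorem isIdeal_iSup {ι : Sort*} {I : ι → Submodule ℂ G} (hI : ∀ i, IsIdeal br (I i)) :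
    IsIdeal br (⨆ i, I i) := by
  rw [isIdeal_iff_le_comap]
  exact fun y => iSup_le fun i =>
    ((isIdeal_iff_le_comap br).1 (hI i) y).trans (Submodule.comap_mono (le_iSup I i))

theorem isIdeal_sSup {s : Set (Submodule ℂ G)} (hs : ∀ I ∈ s, IsIdeal br I) :
    IsIdeal br (sSup s) := by
  rw [sSup_eq_iSup']
  exact isIdeal_iSup fun I => hs I I.2

theorem IsIdealOf.isSubalgebra {W I : Submodule ℂ G} (hI : IsIdealOf br W I) :
    IsSubalgebra br I :=
  fun _ hx => hI.apply_mem (fun i => hI.1 (hx i)) (hx 0)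

theorem IsIdeal.isSubalgebra {I : Submodule ℂ G} (hI : IsIdeal br I) : IsSubalgebra br I :=
  (hI.isIdealOf le_top).isSubalgebra

theorem derivedStep_isIdealOf {W : Submodule ℂ G} (hW : IsSubalgebra br W) :
    IsIdealOf br W (derivedStep br W) := by
  refine ⟨(bracketSpan_le_iff br).2 hW, fun y hy => ?_⟩
  change derivedStep br W ≤ (derivedStep br W).comap (nAdLinearMap br y)
  refine (bracketSpan_le_iff br).2 fun w hw => Submodule.subset_span ⟨_, fun i => ?_, rfl⟩
  induction i using Fin.lastCases with
  | last => simpa using hW w hw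
  | cast i => simpa using hy i

theorem derivedStep_bot : derivedStep br (⊥ : Submodule ℂ G) = ⊥ :=
  eq_bot_iff.2 <| (bracketSpan_le_iff br).2 fun _ hw =>
    (Submodule.mem_bot ℂ).2 (br.map_coord_zero 0 ((Submodule.mem_bot ℂ).1 (hw 0)))

theorem IsSimpleAlg.ne_bot {J : Submodule ℂ G} (hJ : IsSimpleAlg br J) : J ≠ ⊥ := by
  rintro rfl
  exact hJ.1 derivedStep_bot

theorem IsSimpleAlg.derivedStep_eq {J : Submodule ℂ G} (hJ : IsSimpleAlg br J)
    (hsub : IsSubalgebra br J) : derivedStep br J = J :=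
  (hJ.2 _ (derivedStep_isIdealOf hsub)).resolve_left hJ.1

theorem IsSimpleAlg.disjoint_or_le {I J : Submodule ℂ G} (hJs : IsSimpleAlg br J)
    (hJ : IsIdeal br J) (hI : IsIdeal br I) : Disjoint J I ∨ J ≤ I := by
  refine (hJs.2 _ ((hJ.inf hI).isIdealOf inf_le_left)).imp disjoint_iff.2 fun h => ?_
  exact h ▸ inf_le_right

theorem IsSimpleAlg.disjoint_of_ne {J J' : Submodule ℂ G} (hJs : IsSimpleAlg br J)
    (hJ : IsIdeal br J) (hJ's : IsSimpleAlg br J') (hJ' : IsIdeal br J') (hne : J ≠ J') :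
    Disjoint J J' := by
  refine (hJs.disjoint_or_le hJ hJ').resolve_right fun hle => ?_
  rcases hJ's.2 J (hJ.isIdealOf hle) with h | h
  exacts [hJs.ne_bot h, hne h]

theorem le_centralizer_of_disjoint {I J : Submodule ℂ G} (hI : IsIdeal br I) (hJ : IsIdeal br J)
    (hIJ : Disjoint I J) : I ≤ centralizer br J := fun x hx v hv y =>
  (Submodule.disjoint_def.1 hIJ) _ (hI.apply_mem (j := 0) (by simpa using hx))
    (hJ.apply_mem (j := 1) (by simpa using hv))

theorem derivedStep_eq_bot_of_le_centralizer {W : Submodule ℂ G} (hW : W ≤ centralizer br W) :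
    derivedStep br W = ⊥ :=
  eq_bot_iff.2 <| (bracketSpan_le_iff br).2 fun w hw => by
    rw [← Fin.cons_self_tail w, ← Fin.cons_self_tail (Fin.tail w)]
    exact (Submodule.mem_bot ℂ).2 (hW (hw 0) _ (hw 1) _)

theorem iSupIndep_of_isSimpleAlg {ι : Type*} {J : ι → Submodule ℂ G}
    (hinj : Function.Injective J) (hJ : ∀ i, IsIdeal br (J i)) (hJs : ∀ i, IsSimpleAlg br (J i)) :
    iSupIndep J := by
  intro i
  have hrest : IsIdeal br (⨆ (j) (_ : j ≠ i), J j) :=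
    isIdeal_iSup fun j => isIdeal_iSup fun _ => hJ j
  refine ((hJs i).disjoint_or_le (hJ i) hrest).resolve_right fun hle => (hJs i).1 ?_
  refine derivedStep_eq_bot_of_le_centralizer (hle.trans (iSup₂_le fun j hj => ?_))
  exact le_centralizer_of_disjoint (hJ j) (hJ i)
    ((hJs j).disjoint_of_ne (hJ j) (hJs i) (hJ i) (hinj.ne hj))

theorem centralizer_isIdeal (hLie : IsNLie br) {J : Submodule ℂ G} (hJ : IsIdeal br J) :
    IsIdeal br (centralizer br J) := by
  intro y x hx v hv z
  -- of the Jacobi expansion of `[y, [x, v, z]] = 0` only the term `[[y, x], v, z]` survives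
  have key := hLie (Fin.cons x (Fin.cons v z)) y
  rw [hx v hv z, Fin.sum_univ_succ, Fin.sum_univ_succ] at key
  simp only [Fin.cons_zero, Fin.cons_succ, ← Fin.cons_update, Fin.update_cons_zero] at key
  rw [hx (nAd br y v) (hJ y v hv) z, Finset.sum_eq_zero fun k _ => hx v hv _, add_zero,
    add_zero] at key
  exact key.symm.trans (nAdLinearMap br y).map_zero

theorem IsSimpleAlg.disjoint_centralizer (hLie : IsNLie br) {J : Submodule ℂ G}
    (hJs : IsSimpleAlg br J) (hJ : IsIdeal br J) : Disjoint J (centralizer br J) :=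
  (hJs.disjoint_or_le hJ (centralizer_isIdeal hLie hJ)).resolve_right fun h =>
    hJs.1 (derivedStep_eq_bot_of_le_centralizer h)

theorem disjoint_iSup_iInf_centralizer (hLie : IsNLie br) {ι : Type*} [Fintype ι]
    {J : ι → Submodule ℂ G} (hinj : Function.Injective J) (hJ : ∀ i, IsIdeal br (J i))
    (hJs : ∀ i, IsSimpleAlg br (J i)) :
    Disjoint (⨆ i, J i) (⨅ i, centralizer br (J i)) := by
  classical
  rw [← Finset.sup_univ_eq_iSup, ← Finset.inf_univ_eq_iInf]
  exact Finset.univ.disjoint_sup_inf_of_le_of_ne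
    (fun i _ => (hJs i).disjoint_centralizer hLie (hJ i)) fun i _ j _ hij =>
      le_centralizer_of_disjoint (hJ j) (hJ i)
        ((hJs j).disjoint_of_ne (hJ j) (hJs i) (hJ i) (hinj.ne hij.symm))

theorem isStrongSemisimple_iSup {ι : Type*} [Fintype ι] {J : ι → Submodule ℂ G}
    (hinj : Function.Injective J) (hJ : ∀ i, IsIdeal br (J i)) (hJs : ∀ i, IsSimpleAlg br (J i)) :
    IsStrongSemisimple br (⨆ i, J i) := by
  let e := (Fintype.equivFin ι).symm
  exact ⟨Fintype.card ι, J ∘ e, fun k => ⟨(hJ (e k)).isIdealOf (le_iSup J (e k)), hJs (e k)⟩,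
    (iSupIndep_of_isSimpleAlg hinj hJ hJs).comp e.injective, e.iSup_comp⟩

theorem IsIdealOf.isIdeal_of_derivedStep_eq (hLie : IsNLie br) {I T : Submodule ℂ G}
    (hI : IsIdeal br I) (hT : IsIdealOf br I T) (hperf : derivedStep br T = T) :
    IsIdeal br T := by
  refine (isIdeal_iff_le_comap br).2 fun y => hperf.symm.le.trans ?_
  refine (bracketSpan_le_iff br).2 fun w hw => ?_
  change nAd br y (br w) ∈ T
  rw [hLie w y]
  refine Submodule.sum_mem _ fun i _ => ?_
  obtain ⟨j, hji⟩ := exists_ne i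
  refine hT.apply_mem (fun k => ?_) (j := j) (by rw [Function.update_of_ne hji]; exact hw j)
  rcases eq_or_ne k i with rfl | hki
  · rw [Function.update_self]
    exact hI y _ (hT.1 (hw k))
  · rw [Function.update_of_ne hki]
    exact hT.1 (hw k)

theorem IsStrongSemisimple.le_sSup_simple_ideals (hLie : IsNLie br) {I : Submodule ℂ G}
    (hI : IsIdeal br I) (hss : IsStrongSemisimple br I) :
    I ≤ sSup {J : Submodule ℂ G | IsIdeal br J ∧ IsSimpleAlg br J} := by
  obtain ⟨m, T, hT, -, rfl⟩ := hss
  refine iSup_le fun k => le_sSup ⟨?_, (hT k).2⟩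
  exact (hT k).1.isIdeal_of_derivedStep_eq hLie hI ((hT k).2.derivedStep_eq (hT k).1.isSubalgebra)

variable {B : LinearMap.BilinForm ℂ G}

theorem IsIdeal.orthogonal (hsymm : ∀ x y, B x y = B y x) (hinv : IsInvariantForm br B)
    {I : Submodule ℂ G} (hI : IsIdeal br I) : IsIdeal br (B.orthogonal I) := by
  intro y x hx s hs
  rw [hsymm, hinv, neg_eq_zero]
  exact hx _ (hI y s hs)

theorem IsIdeal.eq_bot_of_le_orthogonal (hnd : B.Nondegenerate) (hinv : IsInvariantForm br B)
    {J : Submodule ℂ G} (hJ : IsIdeal br J) (hperf : derivedStep br J = J)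
    (hiso : J ≤ B.orthogonal J) : J = ⊥ := by
  refine eq_bot_iff.2 fun a ha => (Submodule.mem_bot ℂ).2 (hnd.1 a fun g => ?_)
  suffices derivedStep br J ≤ LinearMap.ker (B.flip g) from this (hperf.symm ▸ ha)
  refine (bracketSpan_le_iff br).2 fun w hw => ?_
  rw [LinearMap.mem_ker, LinearMap.BilinForm.flip_apply, ← Fin.snoc_init_self w, hinv, neg_eq_zero]
  exact hiso (by simpa using hw (Fin.last _)) _
    (hJ.apply_mem (j := Fin.castSucc 0) (by simpa [Fin.init] using hw _))

theorem isCompl_orthogonal_iSup [FiniteDimensional ℂ G] (hLie : IsNLie br) (hB : IsMetric br B)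
    {ι : Type*} [Fintype ι] {J : ι → Submodule ℂ G} (hinj : Function.Injective J)
    (hJ : ∀ i, IsIdeal br (J i)) (hJs : ∀ i, IsSimpleAlg br (J i)) :
    IsCompl (⨆ i, J i) (B.orthogonal (⨆ i, J i)) := by
  obtain ⟨hnd, hsymm, hinv⟩ := hB
  set S := ⨆ i, J i
  have hS : IsIdeal br S := isIdeal_iSup hJ
  have hK : IsIdeal br (S ⊓ B.orthogonal S) := hS.inf (hS.orthogonal hsymm hinv)
  have hKJ : ∀ i, Disjoint (J i) (S ⊓ B.orthogonal S) := fun i =>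
    ((hJs i).disjoint_or_le (hJ i) hK).resolve_right fun hle => (hJs i).ne_bot <|
      (hJ i).eq_bot_of_le_orthogonal hnd hinv ((hJs i).derivedStep_eq (hJ i).isSubalgebra)
        (hle.trans (inf_le_right.trans (LinearMap.BilinForm.orthogonal_le (le_iSup J i))))
  refine (LinearMap.BilinForm.isCompl_orthogonal_iff_disjoint
    fun x y h => (hsymm y x).trans h).2 (disjoint_iff_inf_le.2 ?_)
  refine (le_inf inf_le_left (le_iInf fun i => ?_)).trans
    (disjoint_iSup_iInf_centralizer hLie hinj hJ hJs).le_bot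
  exact le_centralizer_of_disjoint hK (hJ i) (hKJ i).symm

end NLieIdeals


variable {n : ℕ} {G : Type*} [AddCommGroup G] [Module ℂ G]

theorem maximal_strong_semisimple_ideal_general
    (br : AlternatingMap ℂ G G (Fin (n + 2))) (hLie : IsNLie br)
    [FiniteDimensional ℂ G]
    (B : LinearMap.BilinForm ℂ G) (hB : IsMetric br B) :
    IsIdeal br (sSup {J : Submodule ℂ G | IsIdeal br J ∧ IsSimpleAlg br J}) ∧
    IsStrongSemisimple br (sSup {J : Submodule ℂ G | IsIdeal br J ∧ IsSimpleAlg br J}) ∧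
    (∀ I : Submodule ℂ G, IsIdeal br I → IsStrongSemisimple br I →
      I ≤ sSup {J : Submodule ℂ G | IsIdeal br J ∧ IsSimpleAlg br J}) ∧
    IsCompl (sSup {J : Submodule ℂ G | IsIdeal br J ∧ IsSimpleAlg br J})
      (B.orthogonal (sSup {J : Submodule ℂ G | IsIdeal br J ∧ IsSimpleAlg br J})) := by
  set 𝒮 := {J : Submodule ℂ G | IsIdeal br J ∧ IsSimpleAlg br J}
  obtain ⟨t, ht𝒮, hsup⟩ := CompleteLattice.WellFoundedGT.isSupFiniteCompact (Submodule ℂ G) 𝒮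
  have hS : sSup 𝒮 = ⨆ J : t, (J : Submodule ℂ G) := by
    rw [hsup, Finset.sup_id_eq_sSup, sSup_eq_iSup']
    rfl
  have hJ : ∀ J : t, IsIdeal br J := fun J => (ht𝒮 J.2).1
  have hJs : ∀ J : t, IsSimpleAlg br J := fun J => (ht𝒮 J.2).2
  refine ⟨isIdeal_sSup fun J hJ => hJ.1, ?_, fun I hI hss => hss.le_sSup_simple_ideals hLie hI, ?_⟩
  · rw [hS]
    exact isStrongSemisimple_iSup Subtype.val_injective hJ hJs
  · rw [hS]
    exact isCompl_orthogonal_iSup hLie hB Subtype.val_injective hJ hJs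

theorem maximal_strong_semisimple_ideal
    (br : AlternatingMap ℂ G G (Fin (n + 2))) (hLie : IsNLie br)
    [FiniteDimensional ℂ G]
    (B : LinearMap.BilinForm ℂ G) (hB : IsMetric br B)
    (hex : ∃ J : Submodule ℂ G, IsIdeal br J ∧ IsSimpleAlg br J) :
    IsIdeal br (sSup {J : Submodule ℂ G | IsIdeal br J ∧ IsSimpleAlg br J}) ∧
    IsStrongSemisimple br (sSup {J : Submodule ℂ G | IsIdeal br J ∧ IsSimpleAlg br J}) ∧
    (∀ I : Submodule ℂ G, IsIdeal br I → IsStrongSemisimple br I →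
      I ≤ sSup {J : Submodule ℂ G | IsIdeal br J ∧ IsSimpleAlg br J}) ∧
    IsCompl (sSup {J : Submodule ℂ G | IsIdeal br J ∧ IsSimpleAlg br J})
      (B.orthogonal (sSup {J : Submodule ℂ G | IsIdeal br J ∧ IsSimpleAlg br J})) :=
  maximal_strong_semisimple_ideal_general br hLie B hB
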